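/- For L = 1, a set S is a feasible bootstrap solution if and only if every directed path between two red vertices (with exactly 2 red vertices: the endpoints) contains a non-final vertex in S; equivalently, S separates, for every ordered pair of red vertices (u, v), all u-to-v paths whose internal vertices are all blue, by containing u or an internal blue vertex of the path. -/

import Mathlib

/-!
Call a path red-blue if its endpoints are red and its interior vertices blue, and call it
unmarked if no vertex except possibly its last one lies in `S`. Along an unmarked red-blue path
the noise level is at least `1` on the first red vertex, never drops through the blue interior, and
gains `1` at the final red vertex, so `S` is infeasible as soon as such a path exists. Conversely,
unwinding the recursion from a vertex of level at least `2` (following an unmarked in-neighbour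
that realises the maximum) walks back through blue vertices to a red vertex of level at least `2`,
and from there through blue vertices of level at least `1` to a red vertex: this traces an
unmarked red-blue path.
-/

/-- Colors of vertices in the circuit DAG. -/
inductive Color where
  | white | blue | red
deriving DecidableEq

variable {V : Type*}

/-- Number of red vertices on a path (given as a list of vertices). -/
def redCount (color : V → Color) (p : List V) : ℕ :=
  (p.filter (fun v => decide (color v = Color.red))).length

/-- In-neighbors of a vertex. -/
def preds [Fintype V] [DecidableEq V] (E : V → V → Prop) [DecidableRel E] (v : V) : Finset V :=
  Finset.univ.filter (fun u => E u v)

/-- `ℓ` satisfies the recursive definition of the noise level w.r.t. the marked set `S`: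
white vertices have level 0, blue vertices the max over in-edges of `ℓ(u)·𝟙[u ∉ S]`,
red vertices that max plus one. -/
def NoiseRec [Fintype V] [DecidableEq V] (E : V → V → Prop) [DecidableRel E]
    (color : V → Color) (S : Finset V) (ℓ : V → ℕ) : Prop :=
  ∀ v : V,
    ℓ v = if color v = Color.white then 0
          else (preds E v).sup (fun u => if u ∈ S then 0 else ℓ u) +
               (if color v = Color.red then 1 else 0)

open List

theorem List.exists_eq_cons_append_singleton {α : Type*} {l : List α} (hl : 2 ≤ l.length) :
    ∃ a m b, l = a :: (m ++ [b]) := by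
  match l, hl with
  | a :: b :: t, _ =>
    obtain ⟨m, c, h⟩ := (eq_nil_or_concat (b :: t)).resolve_left (cons_ne_nil b t)
    exact ⟨a, m, c, by rw [h, concat_eq_append]⟩

theorem List.IsChain.exists_rel_of_mem_tail {α : Type*} {R : α → α → Prop} {a z : α}
    {l : List α} (h : (a :: l).IsChain R) (hz : z ∈ l) : ∃ y, R y z := by
  induction l generalizing a with
  | nil => simp at hz
  | cons b l ih =>
    rw [isChain_cons_cons] at h
    rcases mem_cons.mp hz with rfl | hz
    · exact ⟨a, h.1⟩
    · exact ih h.2 hz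

def SeparatesRedBluePaths (E : V → V → Prop) (color : V → Color) (S : Finset V) : Prop :=
  ∀ u m v, color u = Color.red → (∀ z ∈ m, color z = Color.blue) → color v = Color.red →
    (u :: (m ++ [v])).IsChain E → ∃ z ∈ u :: m, z ∈ S

section Paths

variable {E : V → V → Prop} {color : V → Color} {S : Finset V}

theorem redCount_eq_zero_iff {m : List V} :
    redCount color m = 0 ↔ ∀ z ∈ m, color z ≠ Color.red := by
  simp [redCount, filter_eq_nil_iff]

theorem redCount_cons_append_singleton {u v : V} {m : List V}
    (hu : color u = Color.red) (hv : color v = Color.red) :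
    redCount color (u :: (m ++ [v])) = redCount color m + 2 := by
  simp [redCount, filter_append, hu, hv]

theorem separatesRedBluePaths_iff_forall_redCount_eq_two
    (hwhite : ∀ v u : V, color v = Color.white → ¬ E u v) :
    SeparatesRedBluePaths E color S ↔
      ∀ (p : List V) (hp : p ≠ []), p.IsChain E →
        color (p.head hp) = Color.red → color (p.getLast hp) = Color.red →
        redCount color p = 2 → ∃ z ∈ p.dropLast, z ∈ S := by
  constructor
  · intro hsep p hp hch hu hv hred
    have hlen : 2 ≤ p.length := by
      rcases p with _ | ⟨x, _ | ⟨y, t⟩⟩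
      · exact absurd rfl hp
      · simp_all [redCount]
      · simp
    obtain ⟨u, m, v, rfl⟩ := exists_eq_cons_append_singleton hlen
    simp only [head_cons] at hu
    rw [getLast_cons (by simp), getLast_concat] at hv
    rw [redCount_cons_append_singleton hu hv, Nat.add_eq_right, redCount_eq_zero_iff] at hred
    have hm : ∀ z ∈ m, color z = Color.blue := by
      intro z hz
      cases hc : color z with
      | blue => rfl
      | red => exact absurd hc (hred z hz)
      | white =>
        obtain ⟨y, hyz⟩ := hch.exists_rel_of_mem_tail (mem_append_left _ hz)
        exact absurd hyz (hwhite z y hc)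
    simpa [dropLast_cons_of_ne_nil] using hsep u m v hu hm hv hch
  · intro h u m v hu hm hv hch
    have hred : redCount color (u :: (m ++ [v])) = 2 := by
      rw [redCount_cons_append_singleton hu hv, redCount_eq_zero_iff.mpr]
      intro z hz
      simp [hm z hz]
    simpa [dropLast_cons_of_ne_nil] using
      h (u :: (m ++ [v])) (cons_ne_nil _ _) hch hu (by simpa using hv) hred

theorem separatesRedBluePaths_iff_forall_of_red_of_red :
    SeparatesRedBluePaths E color S ↔
      ∀ (u v : V), color u = Color.red → color v = Color.red →
        ∀ (p : List V) (hp : p ≠ []), p.IsChain E →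
          p.head hp = u → p.getLast hp = v → 2 ≤ p.length →
          (∀ z ∈ (p.drop 1).dropLast, color z = Color.blue) →
          u ∈ S ∨ ∃ z ∈ (p.drop 1).dropLast, z ∈ S := by
  constructor
  · rintro hsep _ _ hu hv p hp hch rfl rfl hlen hm
    obtain ⟨a, m, b, rfl⟩ := exists_eq_cons_append_singleton hlen
    simpa using hsep a m b (by simpa using hu) (by simpa using hm) (by simpa using hv) hch
  · intro h u m v hu hm hv hch
    simpa using h u v hu hv (u :: (m ++ [v])) (cons_ne_nil _ _) hch rfl (by simp) (by simp)
      (by simpa using hm)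

end Paths

section NoiseLevel

def maxInLevel [Fintype V] [DecidableEq V] (E : V → V → Prop) [DecidableRel E] (S : Finset V)
    (ℓ : V → ℕ) (v : V) : ℕ :=
  (preds E v).sup fun u => if u ∈ S then 0 else ℓ u

variable [Fintype V] [DecidableEq V] {E : V → V → Prop} [DecidableRel E]
  {color : V → Color} {S : Finset V} {ℓ : V → ℕ} {u v w : V}

theorem le_maxInLevel (h : E u v) (hu : u ∉ S) : ℓ u ≤ maxInLevel E S ℓ v := by
  have hmem : u ∈ preds E v := by simpa [preds] using h
  simpa [maxInLevel, hu] using Finset.le_sup (f := fun u => if u ∈ S then 0 else ℓ u) hmem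

theorem exists_le_of_le_maxInLevel {k : ℕ} (hk : 0 < k) (h : k ≤ maxInLevel E S ℓ v) :
    ∃ u, E u v ∧ u ∉ S ∧ k ≤ ℓ u := by
  obtain ⟨u, hu, hku⟩ := (Finset.le_sup_iff hk).mp h
  have huS : u ∉ S := fun huS => by simp [huS] at hku; omega
  exact ⟨u, by simpa [preds] using hu, huS, by simpa [huS] using hku⟩

namespace NoiseRec

theorem eq_zero_of_white (hrec : NoiseRec E color S ℓ) (hv : color v = Color.white) :
    ℓ v = 0 := by
  simpa [hv] using hrec v

theorem eq_of_blue (hrec : NoiseRec E color S ℓ) (hv : color v = Color.blue) :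
    ℓ v = maxInLevel E S ℓ v := by
  simpa [maxInLevel, hv] using hrec v

theorem eq_of_red (hrec : NoiseRec E color S ℓ) (hv : color v = Color.red) :
    ℓ v = maxInLevel E S ℓ v + 1 := by
  simpa [maxInLevel, hv] using hrec v

theorem add_one_le_of_isChain (hrec : NoiseRec E color S ℓ) {m : List V}
    (hch : (u :: (m ++ [v])).IsChain E) (hm : ∀ z ∈ m, color z = Color.blue)
    (hS : ∀ z ∈ u :: m, z ∉ S) (hv : color v = Color.red) : ℓ u + 1 ≤ ℓ v := by
  induction m generalizing u with
  | nil =>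
    have := le_maxInLevel (ℓ := ℓ) (isChain_pair.mp hch) (hS u mem_cons_self)
    rw [hrec.eq_of_red hv]
    omega
  | cons y m ih =>
    rw [cons_append, isChain_cons_cons] at hch
    have hy : ℓ u ≤ ℓ y :=
      hrec.eq_of_blue (hm y mem_cons_self) ▸ le_maxInLevel hch.1 (hS u mem_cons_self)
    have := ih hch.2 (fun z hz => hm z (mem_cons_of_mem y hz))
      (fun z hz => hS z (mem_cons_of_mem u hz))
    omega

/-- The path is made to end at a successor `w` of `v` so that, when `v` is blue, the
induction hypothesis at an in-neighbour of `v` can be extended by `v` itself. -/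
theorem exists_isChain_of_one_le (hdag : WellFounded E) (hrec : NoiseRec E color S ℓ)
    (hvS : v ∉ S) (hv : 1 ≤ ℓ v) (hvw : E v w) :
    ∃ u m, color u = Color.red ∧ (∀ z ∈ m, color z = Color.blue) ∧
      (∀ z ∈ u :: m, z ∉ S) ∧ (u :: (m ++ [w])).IsChain E := by
  induction v using hdag.induction generalizing w with
  | _ v ih =>
  cases hc : color v with
  | white => simp [hrec.eq_zero_of_white hc] at hv
  | red => exact ⟨v, [], hc, by simp, by simpa using hvS, by simpa using hvw⟩
  | blue =>
    obtain ⟨x, hxv, hxS, hx⟩ := exists_le_of_le_maxInLevel one_pos (hrec.eq_of_blue hc ▸ hv)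
    obtain ⟨u, m, hu, hm, hS, hch⟩ := ih x hxv hxS hx hxv
    refine ⟨u, m ++ [v], hu, ?_, ?_, ?_⟩
    · simpa [or_imp, forall_and, hc] using hm
    · simpa [or_imp, forall_and, hvS] using hS
    · rw [← cons_append]
      refine hch.append (isChain_singleton w) ?_
      rw [← cons_append, getLast?_concat]
      simpa using hvw

theorem exists_isChain_of_two_le (hdag : WellFounded E) (hrec : NoiseRec E color S ℓ)
    (hv : 2 ≤ ℓ v) :
    ∃ u m w, color u = Color.red ∧ (∀ z ∈ m, color z = Color.blue) ∧
      color w = Color.red ∧ (∀ z ∈ u :: m, z ∉ S) ∧ (u :: (m ++ [w])).IsChain E := by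
  induction v using hdag.induction with
  | _ v ih =>
  cases hc : color v with
  | white => simp [hrec.eq_zero_of_white hc] at hv
  | blue =>
    obtain ⟨x, hxv, -, hx⟩ := exists_le_of_le_maxInLevel two_pos (hrec.eq_of_blue hc ▸ hv)
    exact ih x hxv hx
  | red =>
    have hmax : 1 ≤ maxInLevel E S ℓ v := by have := hrec.eq_of_red hc; omega
    obtain ⟨x, hxv, hxS, hx⟩ := exists_le_of_le_maxInLevel one_pos hmax
    obtain ⟨u, m, hu, hm, hS, hch⟩ := exists_isChain_of_one_le hdag hrec hxS hx hxv
    exact ⟨u, m, v, hu, hm, hc, hS, hch⟩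

theorem le_one_iff_separatesRedBluePaths (hdag : WellFounded E)
    (hrec : NoiseRec E color S ℓ) : (∀ v, ℓ v ≤ 1) ↔ SeparatesRedBluePaths E color S := by
  constructor
  · intro hfeas u m v hu hm hv hch
    by_contra! hS
    have hpath := hrec.add_one_le_of_isChain hch hm hS hv
    have hu1 := hrec.eq_of_red hu
    have hv1 := hfeas v
    omega
  · intro hsep v
    by_contra! hv
    obtain ⟨u, m, w, hu, hm, hw, hS, hch⟩ := hrec.exists_isChain_of_two_le hdag hv
    obtain ⟨z, hz, hzS⟩ := hsep u m w hu hm hw hch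
    exact hS z hz hzS

end NoiseRec

end NoiseLevel

/-- for `L = 1`, `S` is feasible iff every directed path between two red
vertices containing exactly 2 red vertices (its endpoints) has a non-final vertex in `S`;
equivalently, for every ordered pair of red vertices `(u,v)` and every `u`-to-`v` path whose
internal vertices are all blue, `S` contains `u` or an internal blue vertex of the path. -/
theorem stmt17 [Fintype V] [DecidableEq V] (E : V → V → Prop) [DecidableRel E]
    (color : V → Color) (hdag : WellFounded E)
    (hwhite : ∀ v u : V, color v = Color.white → ¬ E u v)
    (S : Finset V) (ℓ : V → ℕ) (hrec : NoiseRec E color S ℓ) :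
    ((∀ v : V, ℓ v ≤ 1) ↔
      ∀ (p : List V) (hp : p ≠ []), p.Chain' E →
        color (p.head hp) = Color.red → color (p.getLast hp) = Color.red →
        redCount color p = 2 → ∃ z ∈ p.dropLast, z ∈ S) ∧
    ((∀ v : V, ℓ v ≤ 1) ↔
      ∀ (u v : V), color u = Color.red → color v = Color.red →
        ∀ (p : List V) (hp : p ≠ []), p.Chain' E →
          p.head hp = u → p.getLast hp = v → 2 ≤ p.length →
          (∀ z ∈ (p.drop 1).dropLast, color z = Color.blue) →
          u ∈ S ∨ ∃ z ∈ (p.drop 1).dropLast, z ∈ S) :=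
  ⟨(hrec.le_one_iff_separatesRedBluePaths hdag).trans
      (separatesRedBluePaths_iff_forall_redCount_eq_two hwhite),
    (hrec.le_one_iff_separatesRedBluePaths hdag).trans
      separatesRedBluePaths_iff_forall_of_red_of_red⟩
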